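/- arXiv:1104.1013 — 2 statements merged into one kernel-verified Lean document; each statement's English description precedes it below -/
import Mathlib

section
/- Let V, H be Hilbert spaces over ℂ, j : V → H continuous linear with dense range, and a : V × V → ℂ a continuous coercive sesquilinear form. Then the operator A associated with (a, j) satisfies the range condition: for every y ∈ H there exists x ∈ D(A) such that x + Ax = y, i.e. I + A is surjective. -/
/-!
The shifted form `b(u, v) = a(u, v) + (j u | j v)_H` is still coercive, and Riesz representation
turns it into an operator `T = S + j* j` on `V` with `b(u, v) = (v | T u)_V`. A coercive operator
is bounded below, so its range is closed, and nothing nonzero is orthogonal to that range, so `T`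
is onto (Lax–Milgram). Solving `T u = j* y` gives `a(u, v) = (j v | y - j u)_H` for all `v`,
so `x = j u` lies in `D(A)` with `A x = y - x`.
-/

open RCLike ContinuousLinearMap InnerProductSpace ComplexConjugate

section

variable {𝕜 E F : Type*} [RCLike 𝕜] [SeminormedAddCommGroup E] [NormedSpace 𝕜 E]
  [SeminormedAddCommGroup F] [NormedSpace 𝕜 F]

/-- Mathlib's sesquilinear forms are conjugate-linear in the first variable, so a form `a` that is
linear in the first variable enters as `(u, v) ↦ conj (a u v)`. -/
noncomputable def conjFormCLM (a : E → F → 𝕜)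
    (ha1 : ∀ u u' v, a (u + u') v = a u v + a u' v)
    (ha2 : ∀ (c : 𝕜) u v, a (c • u) v = c * a u v)
    (ha3 : ∀ u v v', a u (v + v') = a u v + a u v')
    (ha4 : ∀ (c : 𝕜) u v, a u (c • v) = conj c * a u v)
    (M : ℝ) (hbound : ∀ u v, ‖a u v‖ ≤ M * ‖u‖ * ‖v‖) : E →L⋆[𝕜] F →L[𝕜] 𝕜 :=
  LinearMap.mkContinuous₂
    (LinearMap.mk₂'ₛₗ (starRingEnd 𝕜) (RingHom.id 𝕜) (fun u v => conj (a u v))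
      (fun u u' v => by simp [ha1]) (fun c u v => by simp [ha2])
      (fun u v v' => by simp [ha3]) (fun c u v => by simp [ha4]))
    M (fun u v => by simpa using hbound u v)

@[simp]
theorem conjFormCLM_apply (a : E → F → 𝕜) ha1 ha2 ha3 ha4 (M : ℝ) hbound (u : E) (v : F) :
    conjFormCLM a ha1 ha2 ha3 ha4 M hbound u v = conj (a u v) :=
  rfl

end

namespace ContinuousLinearMap

variable {𝕜 E : Type*} [RCLike 𝕜] [NormedAddCommGroup E] [InnerProductSpace 𝕜 E]

local notation "⟪" x ", " y "⟫" => inner 𝕜 x y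

theorem mul_norm_le_norm_of_coercive (T : E →L[𝕜] E) {C : ℝ}
    (hT : ∀ u, C * ‖u‖ ^ 2 ≤ re ⟪T u, u⟫) (u : E) : C * ‖u‖ ≤ ‖T u‖ := by
  rcases (norm_nonneg u).eq_or_lt with hu | hu
  · simp [← hu]
  refine le_of_mul_le_mul_right ?_ hu
  calc C * ‖u‖ * ‖u‖ = C * ‖u‖ ^ 2 := by ring
    _ ≤ re ⟪T u, u⟫ := hT u
    _ ≤ ‖T u‖ * ‖u‖ := (re_le_norm _).trans (norm_inner_le_norm _ _)

theorem isClosed_range_of_coercive [CompleteSpace E] (T : E →L[𝕜] E) {C : ℝ} (hC : 0 < C)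
    (hT : ∀ u, C * ‖u‖ ^ 2 ≤ re ⟪T u, u⟫) : IsClosed (T.range : Set E) := by
  rw [LinearMap.coe_range]
  refine (T.antilipschitz_of_bound (K := (Real.toNNReal C)⁻¹) fun u => ?_).isClosed_range
    T.uniformContinuous
  rw [NNReal.coe_inv, Real.coe_toNNReal _ hC.le, inv_mul_eq_div, le_div_iff₀ hC, mul_comm]
  exact T.mul_norm_le_norm_of_coercive hT u

theorem orthogonal_range_eq_bot_of_coercive (T : E →L[𝕜] E) {C : ℝ} (hC : 0 < C)
    (hT : ∀ u, C * ‖u‖ ^ 2 ≤ re ⟪T u, u⟫) : T.rangeᗮ = ⊥ := by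
  refine (Submodule.eq_bot_iff _).2 fun w hw => ?_
  have hTw : ⟪T w, w⟫ = 0 := (Submodule.mem_orthogonal _ w).1 hw _ ⟨w, rfl⟩
  have := hT w
  rw [hTw, map_zero] at this
  simpa [hC.ne'] using le_antisymm (nonpos_of_mul_nonpos_right this hC) (sq_nonneg ‖w‖)

theorem surjective_of_coercive [CompleteSpace E] (T : E →L[𝕜] E) {C : ℝ} (hC : 0 < C)
    (hT : ∀ u, C * ‖u‖ ^ 2 ≤ re ⟪T u, u⟫) : Function.Surjective T := by
  have : CompleteSpace T.range := (T.isClosed_range_of_coercive hC hT).completeSpace_coe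
  exact LinearMap.range_eq_top.1
    (Submodule.orthogonal_eq_bot_iff.1 (T.orthogonal_range_eq_bot_of_coercive hC hT))

end ContinuousLinearMap

theorem form_operator_range_condition_general
    {V H : Type*}
    [NormedAddCommGroup V] [InnerProductSpace ℂ V] [CompleteSpace V]
    [NormedAddCommGroup H] [InnerProductSpace ℂ H] [CompleteSpace H]
    (j : V →L[ℂ] H)
    (a : V → V → ℂ)
    (ha1 : ∀ u u' v, a (u + u') v = a u v + a u' v)
    (ha2 : ∀ (c : ℂ) (u v : V), a (c • u) v = c * a u v)
    (ha3 : ∀ u v v', a u (v + v') = a u v + a u v')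
    (ha4 : ∀ (c : ℂ) (u v : V), a u (c • v) = (starRingEnd ℂ) c * a u v)
    (M : ℝ) (hbound : ∀ u v, ‖a u v‖ ≤ M * ‖u‖ * ‖v‖)
    (α : ℝ) (hα : 0 < α) (hcoer : ∀ u, α * ‖u‖ ^ 2 ≤ (a u u).re)
    (y : H) :
    ∃ (x z : H) (u : V), j u = x ∧ (∀ v : V, a u v = inner ℂ (j v) z) ∧ x + z = y := by
  set S := continuousLinearMapOfBilin (conjFormCLM a ha1 ha2 ha3 ha4 M hbound)
  have hS : ∀ u v, a u v = inner ℂ v (S u) := fun u v => by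
    rw [← inner_conj_symm, continuousLinearMapOfBilin_apply, conjFormCLM_apply, conj_conj]
  set T := S + adjoint j ∘L j
  have hT : ∀ u, α * ‖u‖ ^ 2 ≤ re (inner ℂ (T u) u) := fun u => by
    have hre : re (inner ℂ (T u) u) = (a u u).re + ‖j u‖ ^ 2 := by
      rw [add_apply, inner_add_left, comp_apply, adjoint_inner_left, hS, ← inner_conj_symm,
        map_add, conj_re, inner_self_eq_norm_sq]
      rfl
    linarith [hcoer u, sq_nonneg ‖j u‖]
  obtain ⟨u, hu⟩ := T.surjective_of_coercive hα hT (adjoint j y)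
  refine ⟨j u, y - j u, u, rfl, fun v => ?_, add_sub_cancel _ _⟩
  have hb : a u v + inner ℂ (j v) (j u) = inner ℂ (j v) y := by
    rw [hS, ← adjoint_inner_right, ← inner_add_right, ← comp_apply, ← add_apply, hu,
      adjoint_inner_right]
  rw [inner_sub_right, ← hb, add_sub_cancel_right]

/-- Range condition for the operator `A` associated with a continuous coercive
sesquilinear form `(a, j)` on complex Hilbert spaces: for every `y ∈ H` there exist
`x ∈ D(A)` (i.e. `x = j u` with `a(u,v) = (A x | j v)_H` for all `v`) such that
`x + A x = y`; in other words `I + A` is surjective. -/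
theorem form_operator_range_condition
    {V H : Type*}
    [NormedAddCommGroup V] [InnerProductSpace ℂ V] [CompleteSpace V]
    [NormedAddCommGroup H] [InnerProductSpace ℂ H] [CompleteSpace H]
    (j : V →L[ℂ] H) (hj : DenseRange j)
    (a : V → V → ℂ)
    (ha1 : ∀ u u' v, a (u + u') v = a u v + a u' v)
    (ha2 : ∀ (c : ℂ) (u v : V), a (c • u) v = c * a u v)
    (ha3 : ∀ u v v', a u (v + v') = a u v + a u v')
    (ha4 : ∀ (c : ℂ) (u v : V), a u (c • v) = (starRingEnd ℂ) c * a u v)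
    (M : ℝ) (hbound : ∀ u v, ‖a u v‖ ≤ M * ‖u‖ * ‖v‖)
    (α : ℝ) (hα : 0 < α) (hcoer : ∀ u, α * ‖u‖ ^ 2 ≤ (a u u).re)
    (y : H) :
    ∃ (x z : H) (u : V), j u = x ∧ (∀ v : V, a u v = inner ℂ (j v) z) ∧ x + z = y :=
  form_operator_range_condition_general j a ha1 ha2 ha3 ha4 M hbound α hα hcoer y
end

section
/- Let H be a Hilbert space, C ⊆ H a nonempty closed convex set with orthogonal projection P onto C, and let (a, j) be a continuous coercive form on V (with j : V → H continuous, dense range) with associated operator A. Assume that for each u ∈ V there exists w ∈ V such that j(w) = P(j(u)) and Re a(w, u − w) ≥ 0. Then for every λ > 0, the resolvent λ(λ + A)⁻¹ leaves C invariant: λ(λ + A)⁻¹ C ⊆ C. -/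
/-!
Write `z = λx`, `p = P z`, and pick `w` with `j w = p` and `Re a(w, λu - w) ≥ 0`; put
`d = λu - w`, so that `j d = z - p`. Coercivity and the hypothesis on `w` give
`α ‖d‖² ≤ Re a(λu, d) = λ Re (j d | y)`, while the variational inequality of the projection,
tested at `z + y ∈ C`, gives `‖j d‖² + Re (j d | y) ≤ 0`. Together they force `j d = 0`,
i.e. `z = P z ∈ C`.
-/

open Filter Topology RCLike

section Projection

variable {𝕂 H : Type*} [RCLike 𝕂] [NormedAddCommGroup H] [InnerProductSpace 𝕂 H]
  [Module ℝ H] [IsScalarTower ℝ 𝕂 H]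

lemma re_inner_sub_le_zero_of_forall_norm_sub_le {C : Set H} (hC : Convex ℝ C) {x p c : H}
    (hp : p ∈ C) (hmin : ∀ c' ∈ C, ‖x - p‖ ≤ ‖x - c'‖) (hc : c ∈ C) :
    re (inner 𝕂 (x - p) (c - p)) ≤ 0 := by
  set R := re (inner 𝕂 (x - p) (c - p))
  set K := ‖c - p‖ ^ 2
  -- minimality of `p` along the segment `p + t (c - p)`, `0 < t ≤ 1`, after dividing by `t`
  have hsegment : ∀ t : ℝ, 0 < t → t ≤ 1 → 2 * R ≤ t * K := by
    intro t ht0 ht1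
    have hexpand : ‖x - (p + t • (c - p))‖ ^ 2 = ‖x - p‖ ^ 2 - t * (2 * R) + t * (t * K) := by
      rw [sub_add_eq_sub_sub, @norm_sub_sq 𝕂, real_smul_eq_coe_smul (K := 𝕂), inner_smul_right,
        re_ofReal_mul, norm_smul, norm_algebraMap', Real.norm_of_nonneg ht0.le]
      ring
    have hle := pow_le_pow_left₀ (norm_nonneg _) (hmin _ (hC.add_smul_sub_mem hp hc ⟨ht0.le, ht1⟩)) 2
    exact le_of_mul_le_mul_left (by linarith) ht0
  have hlim : Tendsto (fun t : ℝ => t * K) (𝓝[>] 0) (𝓝 0) :=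
    tendsto_nhdsWithin_of_tendsto_nhds ((continuous_mul_const K).tendsto' 0 0 (zero_mul K))
  have := ge_of_tendsto hlim (eventually_of_mem (Ioc_mem_nhdsGT one_pos)
    fun t ht => hsegment t ht.1 ht.2)
  linarith

end Projection

lemma mul_norm_sub_sq_le_re_of_coercive {𝕂 V : Type*} [RCLike 𝕂] [NormedAddCommGroup V]
    (a : V → V → 𝕂) (hadd : ∀ u u' v, a (u + u') v = a u v + a u' v)
    {α : ℝ} (hcoer : ∀ u, α * ‖u‖ ^ 2 ≤ re (a u u)) {v w : V} (hw : 0 ≤ re (a w (v - w))) :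
    α * ‖v - w‖ ^ 2 ≤ re (a v (v - w)) := by
  have hsub : a (v - w) (v - w) = a v (v - w) - a w (v - w) :=
    eq_sub_of_add_eq (by rw [← hadd, sub_add_cancel])
  calc α * ‖v - w‖ ^ 2 ≤ re (a (v - w) (v - w)) := hcoer _
    _ = re (a v (v - w)) - re (a w (v - w)) := by rw [hsub, map_sub]
    _ ≤ re (a v (v - w)) := by linarith

theorem resolvent_invariance_general
    {𝕂 : Type*} [RCLike 𝕂] {V H : Type*}
    [NormedAddCommGroup V] [InnerProductSpace 𝕂 V]
    [NormedAddCommGroup H] [InnerProductSpace 𝕂 H]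
    [NormedSpace ℝ H] [IsScalarTower ℝ 𝕂 H]
    (j : V →L[𝕂] H)
    (a : V → V → 𝕂)
    (ha1 : ∀ u u' v, a (u + u') v = a u v + a u' v)
    (ha2 : ∀ (c : 𝕂) (u v : V), a (c • u) v = c * a u v)
    (α : ℝ) (hα : 0 < α) (hcoer : ∀ u, α * ‖u‖ ^ 2 ≤ RCLike.re (a u u))
    (C : Set H) (hCv : Convex ℝ C)
    (P : H → H)
    (hP : ∀ x : H, P x ∈ C ∧ ∀ c ∈ C, ‖x - P x‖ ≤ ‖x - c‖)
    (hinv : ∀ u : V, ∃ w : V, j w = P (j u) ∧ 0 ≤ RCLike.re (a w (u - w)))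
    (lam : ℝ) (hlam : 0 < lam) (x y : H) (u : V)
    (hx : j u = x) (hAx : ∀ v : V, a u v = inner 𝕂 (j v) y)
    (hmem : (lam : 𝕂) • x + y ∈ C) :
    (lam : 𝕂) • x ∈ C := by
  set z := (lam : 𝕂) • x
  obtain ⟨w, hjw, hw⟩ := hinv ((lam : 𝕂) • u)
  have hjlu : j ((lam : 𝕂) • u) = z := by rw [map_smul, hx]
  set d := (lam : 𝕂) • u - w
  have hjd : j d = z - P z := by rw [map_sub, hjlu, hjw, hjlu]
  have hform : α * ‖d‖ ^ 2 ≤ lam * re (inner 𝕂 (j d) y) := by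
    simpa only [ha2, hAx, re_ofReal_mul] using mul_norm_sub_sq_le_re_of_coercive a ha1 hcoer hw
  have hproj : ‖j d‖ ^ 2 + re (inner 𝕂 (j d) y) ≤ 0 := by
    have := re_inner_sub_le_zero_of_forall_norm_sub_le (𝕂 := 𝕂) hCv (hP z).1 (hP z).2 hmem
    rwa [add_sub_right_comm, ← hjd, inner_add_right, map_add, inner_self_eq_norm_sq] at this
  have hy : 0 ≤ re (inner 𝕂 (j d) y) :=
    nonneg_of_mul_nonneg_right (le_trans (by positivity) hform) hlam
  have hjd0 : j d = 0 := norm_le_zero_iff.mp (by nlinarith [norm_nonneg (j d)])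
  rw [hjd0, eq_comm, sub_eq_zero] at hjd
  exact hjd ▸ (hP z).1

/-- Invariance criterion: let `C ⊆ H` be a nonempty closed convex set with metric
projection `P`, and let `A` be the operator associated with a continuous coercive
sesquilinear form `(a, j)`.  If for each `u ∈ V` there is `w ∈ V` with `j w = P (j u)`
and `Re a(w, u − w) ≥ 0`, then for every `λ > 0` the resolvent `λ (λ + A)⁻¹` leaves `C`
invariant: if `(λ + A) x ∈ C` for `x ∈ D(A)`, then `λ x ∈ C`. -/
theorem resolvent_invariance
    {𝕂 : Type*} [RCLike 𝕂] {V H : Type*}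
    [NormedAddCommGroup V] [InnerProductSpace 𝕂 V] [CompleteSpace V]
    [NormedAddCommGroup H] [InnerProductSpace 𝕂 H] [CompleteSpace H]
    [NormedSpace ℝ H] [IsScalarTower ℝ 𝕂 H]
    (j : V →L[𝕂] H) (hj : DenseRange j)
    (a : V → V → 𝕂)
    (ha1 : ∀ u u' v, a (u + u') v = a u v + a u' v)
    (ha2 : ∀ (c : 𝕂) (u v : V), a (c • u) v = c * a u v)
    (ha3 : ∀ u v v', a u (v + v') = a u v + a u v')
    (ha4 : ∀ (c : 𝕂) (u v : V), a u (c • v) = (starRingEnd 𝕂) c * a u v)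
    (M : ℝ) (hbound : ∀ u v, ‖a u v‖ ≤ M * ‖u‖ * ‖v‖)
    (α : ℝ) (hα : 0 < α) (hcoer : ∀ u, α * ‖u‖ ^ 2 ≤ RCLike.re (a u u))
    (C : Set H) (hCne : C.Nonempty) (hCc : IsClosed C) (hCv : Convex ℝ C)
    (P : H → H)
    (hP : ∀ x : H, P x ∈ C ∧ ∀ c ∈ C, ‖x - P x‖ ≤ ‖x - c‖)
    (hinv : ∀ u : V, ∃ w : V, j w = P (j u) ∧ 0 ≤ RCLike.re (a w (u - w)))
    (lam : ℝ) (hlam : 0 < lam) (x y : H) (u : V)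
    (hx : j u = x) (hAx : ∀ v : V, a u v = inner 𝕂 (j v) y)
    (hmem : (lam : 𝕂) • x + y ∈ C) :
    (lam : 𝕂) • x ∈ C :=
  resolvent_invariance_general j a ha1 ha2 α hα hcoer C hCv P hP hinv lam hlam x y u hx hAx hmem
end
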